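/- Let 0 < α < 1, H > 0 and λ ≥ 1. If u : [a,b] → [0,∞) is continuous and satisfies u(t) ≤ (H/Γ(α)) ∫_a^t (t-s)^{α-1} u(s)^λ ds for every t ∈ [a,b], then u(t) = 0 for every t ∈ [a,b]. Consequently, w(t,s) := H·s^λ is a Kamke function of order α on [a,b]. -/

import Mathlib

open MeasureTheory Set intervalIntegral

/-- `w : [a,b] × [0,∞) → [0,∞)` is a Kamke function of order `α` on `[a,b]`. -/
def IsKamkeFunction (α a b : ℝ) (w : ℝ → ℝ → ℝ) : Prop :=
  ContinuousOn (fun p : ℝ × ℝ => w p.1 p.2) (Set.Icc a b ×ˢ Set.Ici 0) ∧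
  (∀ t ∈ Set.Icc a b, ∀ s : ℝ, 0 ≤ s → 0 ≤ w t s) ∧
  (∀ t ∈ Set.Icc a b, w t 0 = 0) ∧
  (∀ v : ℝ → ℝ, ContinuousOn v (Set.Icc a b) → (∀ t ∈ Set.Icc a b, 0 ≤ v t) →
    (∀ t ∈ Set.Icc a b,
      v t ≤ (Real.Gamma α)⁻¹ * ∫ s in a..t, ((t - s) ^ (α - 1) : ℝ) * w s (v s)) →
    Filter.Tendsto (fun t => v t / (t - a) ^ α) (nhdsWithin a (Set.Ioi a)) (nhds 0) →
    ∀ t ∈ Set.Icc a b, v t = 0)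

/-!
Let `M = max u`. Since `u ^ λ ≤ M ^ (λ - 1) * u`, the function `u` satisfies the *linear*
weakly singular inequality `u t ≤ K ∫_a^t (t - s)^(α-1) u s ds` with `K = H M^(λ-1) / Γ(α)`.
If `u` vanishes on `[a, c]` and `N` is its maximum on `[a, c + δ]`, attained at `x > c`, then
`N = u x ≤ K N (x - c)^α / α ≤ K N δ^α / α`, so `N = 0` as soon as `K δ^α / α < 1`.
Marching from `a` in steps of such a `δ` covers `[a, b]`.
-/

open Real

section Kernel

variable {α : ℝ}

theorem intervalIntegrable_sub_rpow {r : ℝ} (hr : -1 < r) (t p q : ℝ) :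
    IntervalIntegrable (fun s => (t - s) ^ r) volume p q := by
  simpa using (intervalIntegrable_rpow' hr (a := t - p) (b := t - q)).comp_sub_left t

theorem integral_sub_rpow_sub_one (hα : 0 < α) (c t : ℝ) :
    ∫ s in c..t, (t - s) ^ (α - 1) = (t - c) ^ α / α := by
  rw [integral_comp_sub_left (fun x => x ^ (α - 1)) t, sub_self,
    integral_rpow (Or.inl (by linarith)), sub_add_cancel, zero_rpow hα.ne', sub_zero]

theorem intervalIntegrable_sub_rpow_mul {f : ℝ → ℝ} {p q : ℝ} (hα : 0 < α) (t : ℝ)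
    (hf : ContinuousOn f (uIcc p q)) :
    IntervalIntegrable (fun s => (t - s) ^ (α - 1) * f s) volume p q :=
  (intervalIntegrable_sub_rpow (by linarith) t p q).mul_continuousOn hf

theorem integral_sub_rpow_mul_le {u : ℝ → ℝ} {a c t N : ℝ} (hα : 0 < α) (hac : a ≤ c)
    (hct : c ≤ t) (hu : ContinuousOn u (Icc a t)) (hzero : ∀ s ∈ Icc a c, u s = 0)
    (hN : ∀ s ∈ Icc c t, u s ≤ N) :
    ∫ s in a..t, (t - s) ^ (α - 1) * u s ≤ N * ((t - c) ^ α / α) := by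
  have hint : ∀ p q, Icc p q ⊆ Icc a t → p ≤ q →
      IntervalIntegrable (fun s => (t - s) ^ (α - 1) * u s) volume p q := fun p q hpq hle =>
    intervalIntegrable_sub_rpow_mul hα t (hu.mono (by rwa [uIcc_of_le hle]))
  have hleft : ∫ s in a..c, (t - s) ^ (α - 1) * u s = 0 := by
    refine (integral_congr fun s hs => ?_).trans integral_zero
    rw [uIcc_of_le hac] at hs
    simp [hzero s hs]
  have hright :
      ∫ s in c..t, (t - s) ^ (α - 1) * u s ≤ ∫ s in c..t, N * (t - s) ^ (α - 1) := by
    refine integral_mono_on hct (hint c t (Icc_subset_Icc hac le_rfl) hct)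
      ((intervalIntegrable_sub_rpow (by linarith) t c t).const_mul N) fun s hs => ?_
    rw [mul_comm N]
    exact mul_le_mul_of_nonneg_left (hN s hs) (rpow_nonneg (by linarith [hs.2]) _)
  rw [← integral_add_adjacent_intervals (hint a c (Icc_subset_Icc le_rfl hct) hac)
    (hint c t (Icc_subset_Icc hac le_rfl) hct), hleft, zero_add]
  rwa [intervalIntegral.integral_const_mul, integral_sub_rpow_sub_one hα] at hright

end Kernel

section Vanishing

variable {a b α K δ : ℝ} {u : ℝ → ℝ}

theorem eq_zero_le_add_of_eq_zero_le (hα : 0 < α) (hK : 0 ≤ K) (hu : ContinuousOn u (Icc a b))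
    (hnn : ∀ t ∈ Icc a b, 0 ≤ u t)
    (hineq : ∀ t ∈ Icc a b, u t ≤ K * ∫ s in a..t, (t - s) ^ (α - 1) * u s)
    (hsmall : K * (δ ^ α / α) < 1) {c : ℝ} (hac : a ≤ c)
    (hzero : ∀ s ∈ Icc a b, s ≤ c → u s = 0) :
    ∀ s ∈ Icc a b, s ≤ c + δ → u s = 0 := by
  set d := min b (c + δ)
  have hsub : Icc a d ⊆ Icc a b := Icc_subset_Icc le_rfl (min_le_left _ _)
  intro s hs hsc
  have hsd : s ∈ Icc a d := ⟨hs.1, le_min hs.2 hsc⟩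
  obtain ⟨x, hx, hmax⟩ := isCompact_Icc.exists_isMaxOn ⟨s, hsd⟩ (hu.mono hsub)
  suffices hux : u x ≤ 0 from le_antisymm ((hmax hsd).trans hux) (hnn s hs)
  rcases le_or_gt x c with hxc | hcx
  · exact (hzero x (hsub hx) hxc).le
  have hbound := integral_sub_rpow_mul_le hα hac hcx.le
    (hu.mono (Icc_subset_Icc le_rfl (hsub hx).2))
    (fun s hs => hzero s ⟨hs.1, hs.2.trans (hcx.le.trans (hsub hx).2)⟩ hs.2)
    (fun s hs => hmax ⟨hac.trans hs.1, hs.2.trans hx.2⟩)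
  have hxδ : (x - c) ^ α ≤ δ ^ α :=
    rpow_le_rpow (by linarith) (by linarith [hx.2.trans (min_le_right b (c + δ))]) hα.le
  have hux := hnn x (hsub hx)
  have hcontract : u x ≤ K * (δ ^ α / α) * u x :=
    calc u x ≤ K * (u x * ((x - c) ^ α / α)) :=
          (hineq x (hsub hx)).trans (mul_le_mul_of_nonneg_left hbound hK)
      _ ≤ K * (u x * (δ ^ α / α)) := by gcongr
      _ = K * (δ ^ α / α) * u x := by ring
  nlinarith

theorem exists_pos_mul_rpow_div_lt_one (hα : 0 < α) (K : ℝ) :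
    ∃ δ > 0, K * (δ ^ α / α) < 1 := by
  have hcont : Continuous fun δ : ℝ => K * (δ ^ α / α) := by
    fun_prop (disch := exact hα.le)
  have hev : ∀ᶠ δ in nhdsWithin 0 (Ioi 0), K * (δ ^ α / α) < 1 :=
    nhdsWithin_le_nhds ((hcont.tendsto' 0 0 (by simp [zero_rpow hα.ne'])).eventually
      (gt_mem_nhds one_pos))
  obtain ⟨δ, hlt, hδ⟩ := (hev.and self_mem_nhdsWithin).exists
  exact ⟨δ, hδ, hlt⟩

theorem eq_zero_of_le_integral_sub_rpow_mul (hα : 0 < α) (hK : 0 ≤ K)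
    (hu : ContinuousOn u (Icc a b)) (hnn : ∀ t ∈ Icc a b, 0 ≤ u t)
    (hineq : ∀ t ∈ Icc a b, u t ≤ K * ∫ s in a..t, (t - s) ^ (α - 1) * u s) :
    ∀ t ∈ Icc a b, u t = 0 := by
  obtain ⟨δ, hδ, hsmall⟩ := exists_pos_mul_rpow_div_lt_one hα K
  have hmarch : ∀ n : ℕ, ∀ s ∈ Icc a b, s ≤ a + n * δ → u s = 0 := by
    intro n
    induction n with
    | zero =>
      intro s hs has
      obtain rfl : s = a := le_antisymm (by simpa using has) hs.1
      exact le_antisymm (by simpa using hineq s hs) (hnn s hs)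
    | succ n ih =>
      intro s hs hsn
      refine eq_zero_le_add_of_eq_zero_le hα hK hu hnn hineq hsmall ?_ ih s hs ?_
      · nlinarith [n.cast_nonneg (α := ℝ)]
      · push_cast at hsn; linarith
  intro t ht
  obtain ⟨n, hn⟩ := exists_nat_ge ((b - a) / δ)
  rw [div_le_iff₀ hδ] at hn
  exact hmarch n t ht (by linarith [ht.2])

theorem rpow_le_rpow_sub_one_mul {x M lam : ℝ} (hx : 0 ≤ x) (hxM : x ≤ M) (hlam : 1 ≤ lam) :
    x ^ lam ≤ M ^ (lam - 1) * x := by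
  calc x ^ lam = x ^ (lam - 1) * x := by
        rw [← rpow_add_one' hx (by linarith), sub_add_cancel]
    _ ≤ M ^ (lam - 1) * x := by gcongr

theorem eq_zero_of_le_integral_sub_rpow_mul_rpow {C lam : ℝ} (hα : 0 < α) (hC : 0 ≤ C)
    (hlam : 1 ≤ lam) (hu : ContinuousOn u (Icc a b)) (hnn : ∀ t ∈ Icc a b, 0 ≤ u t)
    (hineq : ∀ t ∈ Icc a b, u t ≤ C * ∫ s in a..t, (t - s) ^ (α - 1) * u s ^ lam) :
    ∀ t ∈ Icc a b, u t = 0 := by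
  intro t ht
  obtain ⟨x, hx, hmax⟩ := isCompact_Icc.exists_isMaxOn ⟨t, ht⟩ hu
  refine eq_zero_of_le_integral_sub_rpow_mul hα (K := C * u x ^ (lam - 1))
    (by have := hnn x hx; positivity) hu hnn (fun t ht => ?_) t ht
  have hsub : uIcc a t ⊆ Icc a b := by rw [uIcc_of_le ht.1]; exact Icc_subset_Icc le_rfl ht.2
  have hlin : ∫ s in a..t, (t - s) ^ (α - 1) * u s ^ lam
      ≤ ∫ s in a..t, u x ^ (lam - 1) * ((t - s) ^ (α - 1) * u s) := by
    refine integral_mono_on ht.1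
      (intervalIntegrable_sub_rpow_mul hα t
        ((hu.mono hsub).rpow_const fun _ _ => Or.inr (by linarith)))
      ((intervalIntegrable_sub_rpow_mul hα t (hu.mono hsub)).const_mul _) fun s hs => ?_
    have hs' : s ∈ Icc a b := hsub (Icc_subset_uIcc hs)
    rw [mul_left_comm]
    exact mul_le_mul_of_nonneg_left (rpow_le_rpow_sub_one_mul (hnn s hs') (hmax hs') hlam)
      (rpow_nonneg (by linarith [hs.2]) _)
  rw [intervalIntegral.integral_const_mul] at hlin
  rw [mul_assoc]
  exact (hineq t ht).trans (mul_le_mul_of_nonneg_left hlin hC)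

end Vanishing

theorem superlinear_is_kamke_general
    (a b α H lam : ℝ) (hα0 : 0 < α) (hH : 0 < H)
    (hlam : 1 ≤ lam) :
    (∀ u : ℝ → ℝ, ContinuousOn u (Set.Icc a b) → (∀ t ∈ Set.Icc a b, 0 ≤ u t) →
      (∀ t ∈ Set.Icc a b,
        u t ≤ H / Real.Gamma α * ∫ s in a..t, ((t - s) ^ (α - 1) : ℝ) * u s ^ lam) →
      ∀ t ∈ Set.Icc a b, u t = 0) ∧
    IsKamkeFunction α a b (fun _ s => H * s ^ lam) := by
  have hC : 0 ≤ H / Gamma α := div_nonneg hH.le (Gamma_pos_of_pos hα0).le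
  refine ⟨fun u => eq_zero_of_le_integral_sub_rpow_mul_rpow hα0 hC hlam, ?_,
    fun t _ s hs => by positivity, fun t _ => by simp [zero_rpow (by linarith : lam ≠ 0)], ?_⟩
  · exact (continuous_const.mul
      ((continuous_rpow_const (by linarith)).comp continuous_snd)).continuousOn
  · intro v hv hnn hineq _
    refine eq_zero_of_le_integral_sub_rpow_mul_rpow hα0 hC hlam hv hnn
      fun t ht => (hineq t ht).trans_eq ?_
    simp only [mul_left_comm _ H, intervalIntegral.integral_const_mul, div_eq_inv_mul, mul_assoc]

/-- For `0 < α < 1`, `H > 0`, `λ ≥ 1`: every continuous nonnegative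
`u : [a,b] → [0,∞)` satisfying `u(t) ≤ (H/Γ(α)) ∫_a^t (t-s)^{α-1} u(s)^λ ds` vanishes
identically on `[a,b]`; consequently `w(t,s) = H·s^λ` is a Kamke function of order `α`
on `[a,b]`. -/
theorem superlinear_is_kamke
    (a b α H lam : ℝ) (hab : a < b) (hα0 : 0 < α) (hα1 : α < 1) (hH : 0 < H)
    (hlam : 1 ≤ lam) :
    (∀ u : ℝ → ℝ, ContinuousOn u (Set.Icc a b) → (∀ t ∈ Set.Icc a b, 0 ≤ u t) →
      (∀ t ∈ Set.Icc a b,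
        u t ≤ H / Real.Gamma α * ∫ s in a..t, ((t - s) ^ (α - 1) : ℝ) * u s ^ lam) →
      ∀ t ∈ Set.Icc a b, u t = 0) ∧
    IsKamkeFunction α a b (fun _ s => H * s ^ lam) :=
  superlinear_is_kamke_general a b α H lam hα0 hH hlam
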